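/- Let s* = −A^{-1}b where A = α²(Γ ⊗ Σ) + σ² I is positive definite with λ_min(A) ≥ σ² > 0, and let s̄ = −Ā^{-1}b where Ā = α²(Γ̄ ⊗ Σ) + σ² I is also positive definite with λ_min(Ā) ≥ σ², with α ≤ 1. Then ‖s̄ − s*‖₂ ≤ σ^{-4} ‖Σ‖_F · ‖Γ − Γ̄‖_F · ‖b‖₂. -/

import Mathlib

open Matrix Kronecker Finset

/-- Euclidean norm of a vector. -/
noncomputable def l2norm {ι : Type*} [Fintype ι] (v : ι → ℝ) : ℝ := Real.sqrt (v ⬝ᵥ v)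

/-- Frobenius norm of a matrix. -/
noncomputable def frobNorm {ι κ : Type*} [Fintype ι] [Fintype κ]
    (A : Matrix ι κ ℝ) : ℝ := Real.sqrt (∑ i, ∑ j, (A i j) ^ 2)

/-!
The resolvent identity `A⁻¹ - Ā⁻¹ = A⁻¹ (Ā - A) Ā⁻¹` writes `s̄ - s*` as
`A⁻¹ (Ā - A) Ā⁻¹ b`, where `Ā - A = α² ((Γ̄ - Γ) ⊗ Σ)`. The coercivity bound
`σ² ‖x‖² ≤ xᵀ A x` gives `‖A⁻¹ v‖ ≤ σ⁻² ‖v‖` (and likewise for `Ā`), the middle factor is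
controlled by its Frobenius norm, which is multiplicative on Kronecker products, and `α² ≤ 1`.
-/

lemma sub_kronecker {l m n p R : Type*} [NonUnitalNonAssocRing R]
    (X Y : Matrix l m R) (Z : Matrix n p R) : (X - Y) ⊗ₖ Z = X ⊗ₖ Z - Y ⊗ₖ Z := by
  ext
  simp [sub_mul]

section Norms

variable {ι κ : Type*} [Fintype ι] [Fintype κ]

lemma l2norm_nonneg (v : ι → ℝ) : 0 ≤ l2norm v :=
  Real.sqrt_nonneg _

lemma l2norm_sq (v : ι → ℝ) : l2norm v ^ 2 = v ⬝ᵥ v :=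
  Real.sq_sqrt (Finset.sum_nonneg fun i _ => mul_self_nonneg (v i))

lemma dotProduct_le_l2norm_mul_l2norm (v w : ι → ℝ) : v ⬝ᵥ w ≤ l2norm v * l2norm w := by
  simpa [l2norm, dotProduct, pow_two] using Real.sum_mul_le_sqrt_mul_sqrt Finset.univ v w

lemma frobNorm_nonneg (M : Matrix ι κ ℝ) : 0 ≤ frobNorm M :=
  Real.sqrt_nonneg _

lemma frobNorm_smul (c : ℝ) (M : Matrix ι κ ℝ) : frobNorm (c • M) = |c| * frobNorm M := by
  simp only [frobNorm, Matrix.smul_apply, smul_eq_mul, mul_pow, ← Finset.mul_sum]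
  rw [Real.sqrt_mul (sq_nonneg c), Real.sqrt_sq_eq_abs]

lemma frobNorm_sub_comm (M M' : Matrix ι κ ℝ) : frobNorm (M - M') = frobNorm (M' - M) := by
  simp only [frobNorm, Matrix.sub_apply, sub_sq_comm (M _ _)]

lemma frobNorm_kronecker {ι' κ' : Type*} [Fintype ι'] [Fintype κ']
    (X : Matrix ι κ ℝ) (Y : Matrix ι' κ' ℝ) :
    frobNorm (X ⊗ₖ Y) = frobNorm X * frobNorm Y := by
  rw [frobNorm, frobNorm, frobNorm, ← Real.sqrt_mul
    (Finset.sum_nonneg fun i _ => Finset.sum_nonneg fun j _ => sq_nonneg (X i j))]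
  congr 1
  simp only [Fintype.sum_prod_type, kroneckerMap_apply, mul_pow, Finset.sum_mul_sum]

lemma l2norm_mulVec_le (M : Matrix ι κ ℝ) (v : κ → ℝ) :
    l2norm (M *ᵥ v) ≤ frobNorm M * l2norm v := by
  have row_bound (i : ι) : (M *ᵥ v) i * (M *ᵥ v) i ≤ (∑ j, M i j ^ 2) * (v ⬝ᵥ v) := by
    simpa [mulVec, dotProduct, pow_two] using
      Finset.sum_mul_sq_le_sq_mul_sq Finset.univ (fun j => M i j) v
  calc l2norm (M *ᵥ v) ≤ Real.sqrt ((∑ i, ∑ j, M i j ^ 2) * (v ⬝ᵥ v)) := by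
        rw [l2norm, Finset.sum_mul]
        exact Real.sqrt_le_sqrt (Finset.sum_le_sum fun i _ => row_bound i)
    _ = frobNorm M * l2norm v :=
        Real.sqrt_mul (Finset.sum_nonneg fun i _ => Finset.sum_nonneg fun j _ => sq_nonneg _) _

end Norms

section Coercive

variable {n : Type*} [Fintype n] [DecidableEq n] {A : Matrix n n ℝ} {c : ℝ}

lemma isUnit_of_coercive (hc : 0 < c) (hA : ∀ x, c * (x ⬝ᵥ x) ≤ x ⬝ᵥ A *ᵥ x) : IsUnit A := by
  refine mulVec_injective_iff_isUnit.1 fun x y hxy => sub_eq_zero.1 ?_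
  have hz : A *ᵥ (x - y) = 0 := by rw [mulVec_sub, hxy, sub_self]
  have hle : c * ((x - y) ⬝ᵥ (x - y)) ≤ 0 := by simpa [hz] using hA (x - y)
  have hnonneg : 0 ≤ (x - y) ⬝ᵥ (x - y) := Finset.sum_nonneg fun i _ => mul_self_nonneg _
  exact dotProduct_self_eq_zero.1 (le_antisymm (nonpos_of_mul_nonpos_right hle hc) hnonneg)

lemma l2norm_inv_mulVec_le (hc : 0 < c) (hA : ∀ x, c * (x ⬝ᵥ x) ≤ x ⬝ᵥ A *ᵥ x)
    (v : n → ℝ) : l2norm (A⁻¹ *ᵥ v) ≤ c⁻¹ * l2norm v := by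
  set y := A⁻¹ *ᵥ v
  have hAy : A *ᵥ y = v := by
    rw [mulVec_mulVec, mul_nonsing_inv _ ((isUnit_of_coercive hc hA).map detMonoidHom),
      one_mulVec]
  have hsq : c * l2norm y * l2norm y ≤ l2norm v * l2norm y := by
    rw [mul_assoc, ← pow_two, l2norm_sq, mul_comm (l2norm v)]
    exact (hA y).trans (hAy ▸ dotProduct_le_l2norm_mul_l2norm y v)
  rw [le_inv_mul_iff₀ hc]
  rcases (l2norm_nonneg y).eq_or_lt with hy | hy
  · rw [← hy, mul_zero]
    exact l2norm_nonneg v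
  · exact le_of_mul_le_mul_right hsq hy

end Coercive

theorem truncated_score_bound_general {N d : ℕ}
    (Γ Γbar : Matrix (Fin N) (Fin N) ℝ) (S : Matrix (Fin d) (Fin d) ℝ)
    (α σ : ℝ) (hα0 : 0 ≤ α) (hα1 : α ≤ 1) (hσ : 0 < σ)
    (A Abar : Matrix (Fin N × Fin d) (Fin N × Fin d) ℝ)
    (hA : A = α ^ 2 • (Γ ⊗ₖ S) + σ ^ 2 • 1)
    (hAbar : Abar = α ^ 2 • (Γbar ⊗ₖ S) + σ ^ 2 • 1)
    (hAmin : ∀ x : Fin N × Fin d → ℝ, σ ^ 2 * (x ⬝ᵥ x) ≤ x ⬝ᵥ A.mulVec x)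
    (hAbarmin : ∀ x : Fin N × Fin d → ℝ, σ ^ 2 * (x ⬝ᵥ x) ≤ x ⬝ᵥ Abar.mulVec x)
    (b sstar sbar : Fin N × Fin d → ℝ)
    (hstar : sstar = -(A⁻¹.mulVec b)) (hbar : sbar = -(Abar⁻¹.mulVec b)) :
    l2norm (sbar - sstar) ≤ (σ ^ 4)⁻¹ * frobNorm S * frobNorm (Γ - Γbar) * l2norm b := by
  have hσ2 : 0 < σ ^ 2 := by positivity
  have hdiff : Abar - A = α ^ 2 • ((Γbar - Γ) ⊗ₖ S) := by
    rw [hA, hAbar, sub_kronecker, smul_sub]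
    abel
  have hs : sbar - sstar = A⁻¹ *ᵥ ((Abar - A) *ᵥ (Abar⁻¹ *ᵥ b)) := by
    rw [mulVec_mulVec, mulVec_mulVec, ← Matrix.inv_sub_inv, hbar, hstar, sub_mulVec]
    · abel
    · exact iff_of_true (isUnit_of_coercive hσ2 hAmin) (isUnit_of_coercive hσ2 hAbarmin)
  have hfrob : frobNorm (Abar - A) ≤ frobNorm S * frobNorm (Γ - Γbar) := by
    rw [hdiff, frobNorm_smul, abs_sq, frobNorm_kronecker, frobNorm_sub_comm,
      mul_comm (frobNorm _) (frobNorm S)]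
    exact mul_le_of_le_one_left (mul_nonneg (frobNorm_nonneg _) (frobNorm_nonneg _))
      (pow_le_one₀ hα0 hα1)
  calc l2norm (sbar - sstar)
      ≤ (σ ^ 2)⁻¹ * (frobNorm (Abar - A) * ((σ ^ 2)⁻¹ * l2norm b)) := by
        rw [hs]
        refine (l2norm_inv_mulVec_le hσ2 hAmin _).trans ?_
        gcongr
        exact (l2norm_mulVec_le _ _).trans
          (by gcongr; exacts [frobNorm_nonneg _, l2norm_inv_mulVec_le hσ2 hAbarmin b])
    _ ≤ (σ ^ 2)⁻¹ * (frobNorm S * frobNorm (Γ - Γbar) * ((σ ^ 2)⁻¹ * l2norm b)) := by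
        gcongr
        exact mul_nonneg (inv_nonneg.2 hσ2.le) (l2norm_nonneg b)
    _ = (σ ^ 4)⁻¹ * frobNorm S * frobNorm (Γ - Γbar) * l2norm b := by
        rw [show σ ^ 4 = σ ^ 2 * σ ^ 2 by ring, mul_inv]
        ring

/-- Truncated-score perturbation bound: with
`A = α²(Γ ⊗ Σ) + σ²I` and `Ā = α²(Γ̄ ⊗ Σ) + σ²I` both positive definite with smallest
eigenvalue at least `σ² > 0`, `s* = -A⁻¹b`, `s̄ = -Ā⁻¹b`, and `0 ≤ α ≤ 1`,
`‖s̄ - s*‖₂ ≤ σ⁻⁴ ‖Σ‖_F ‖Γ - Γ̄‖_F ‖b‖₂`. -/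
theorem truncated_score_bound {N d : ℕ}
    (Γ Γbar : Matrix (Fin N) (Fin N) ℝ) (S : Matrix (Fin d) (Fin d) ℝ)
    (hΓ : Γ.IsSymm) (hΓbar : Γbar.IsSymm) (hS : S.IsSymm)
    (α σ : ℝ) (hα0 : 0 ≤ α) (hα1 : α ≤ 1) (hσ : 0 < σ)
    (A Abar : Matrix (Fin N × Fin d) (Fin N × Fin d) ℝ)
    (hA : A = α ^ 2 • (Γ ⊗ₖ S) + σ ^ 2 • 1)
    (hAbar : Abar = α ^ 2 • (Γbar ⊗ₖ S) + σ ^ 2 • 1)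
    (hApd : A.PosDef) (hAbarpd : Abar.PosDef)
    (hAmin : ∀ x : Fin N × Fin d → ℝ, σ ^ 2 * (x ⬝ᵥ x) ≤ x ⬝ᵥ A.mulVec x)
    (hAbarmin : ∀ x : Fin N × Fin d → ℝ, σ ^ 2 * (x ⬝ᵥ x) ≤ x ⬝ᵥ Abar.mulVec x)
    (b sstar sbar : Fin N × Fin d → ℝ)
    (hstar : sstar = -(A⁻¹.mulVec b)) (hbar : sbar = -(Abar⁻¹.mulVec b)) :
    l2norm (sbar - sstar) ≤ (σ ^ 4)⁻¹ * frobNorm S * frobNorm (Γ - Γbar) * l2norm b :=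
  truncated_score_bound_general Γ Γbar S α σ hα0 hα1 hσ A Abar hA hAbar hAmin hAbarmin b sstar sbar
    hstar hbar
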